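/- arXiv:2211.08961 — 3 statements merged into one kernel-verified Lean document; each statement's English description precedes it below -/
import Mathlib

section
/- For F ∈ L²(Ω)^{d×d} with Div F ∈ L²(Ω)^d and v ∈ H¹₀(Ω)^d, one has the bound t|⟨Div F, v⟩| ≤ (‖Dev F‖² + t²‖tr F‖²)^{1/2} · ‖v‖_t, where ‖v‖_t² = ‖v‖² + t²‖∇v‖² + ‖div v‖², valid for all t > 0. -/
open scoped RealInnerProductSpace

/-- Abstract L² setting: `Vec` = vector-valued L² fields, `Mat` = matrix-valued L²
fields (Frobenius), `Scal` = scalar L². For `F ∈ H(Div;Ω)` and `v ∈ H¹₀(Ω)^d`, using the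
integration-by-parts identity `⟨Div F, v⟩ = -⟨F, ∇v⟩` and the splitting
`⟨F, ∇v⟩ = ⟨Dev F, ∇v⟩ + (1/d)⟨tr F, div v⟩` (from `F = Dev F + (1/d)tr(F)I` and
`I : ∇v = div v`), one has `t|⟨Div F, v⟩| ≤ (‖Dev F‖² + t²‖tr F‖²)^{1/2}·‖v‖_t`. -/
theorem stmt8 {Vec Mat Scal : Type*}
    [NormedAddCommGroup Vec] [InnerProductSpace ℝ Vec]
    [NormedAddCommGroup Mat] [InnerProductSpace ℝ Mat]
    [NormedAddCommGroup Scal] [InnerProductSpace ℝ Scal]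
    (d : ℕ) (hd : 0 < d) (t : ℝ) (ht : 0 < t)
    (F DevF gradv : Mat) (DivF v : Vec) (trF divv : Scal)
    (hibp : ⟪DivF, v⟫ = -⟪F, gradv⟫)
    (hsplit : ⟪F, gradv⟫ = ⟪DevF, gradv⟫ + (d : ℝ)⁻¹ * ⟪trF, divv⟫) :
    t * |⟪DivF, v⟫| ≤ Real.sqrt (‖DevF‖ ^ 2 + t ^ 2 * ‖trF‖ ^ 2)
      * Real.sqrt (‖v‖ ^ 2 + t ^ 2 * ‖gradv‖ ^ 2 + ‖divv‖ ^ 2) := by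
  rw [hibp, abs_neg, hsplit]
  have h1 := abs_real_inner_le_norm DevF gradv
  have h2 := abs_real_inner_le_norm trF divv
  have hdinv : (0:ℝ) < (d:ℝ)⁻¹ := by positivity
  have hd1 : (d:ℝ)⁻¹ ≤ 1 := by
    rw [inv_le_one_iff₀]; right; exact_mod_cast hd
  have habs : |⟪DevF, gradv⟫ + (d : ℝ)⁻¹ * ⟪trF, divv⟫|
      ≤ ‖DevF‖ * ‖gradv‖ + ‖trF‖ * ‖divv‖ := by
    have h3 := abs_add_le ⟪DevF, gradv⟫ ((d : ℝ)⁻¹ * ⟪trF, divv⟫)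
    rw [abs_mul, abs_of_pos hdinv] at h3
    nlinarith [abs_nonneg ⟪trF, divv⟫]
  set a := ‖DevF‖; set c := ‖trF‖; set g := ‖gradv‖; set s := ‖divv‖; set V := ‖v‖
  have ha : 0 ≤ a := norm_nonneg _
  have hc : 0 ≤ c := norm_nonneg _
  have hg : 0 ≤ g := norm_nonneg _
  have hs : 0 ≤ s := norm_nonneg _
  have hV : 0 ≤ V := norm_nonneg _
  have key : t * (a * g + c * s) ≤
      Real.sqrt (a ^ 2 + t ^ 2 * c ^ 2) * Real.sqrt (V ^ 2 + t ^ 2 * g ^ 2 + s ^ 2) := by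
    rw [← Real.sqrt_mul (by positivity)]
    rw [Real.le_sqrt (by positivity)]
    nlinarith [sq_nonneg (a * s - t ^ 2 * c * g), sq_nonneg (V * t), mul_nonneg (mul_nonneg ha hg) (mul_nonneg hc hs), sq_nonneg V, mul_nonneg (sq_nonneg t) (sq_nonneg V), mul_nonneg (mul_nonneg (sq_nonneg a) (sq_nonneg V)) (le_of_lt ht)]
    positivity
  calc t * |⟪DevF, gradv⟫ + (d : ℝ)⁻¹ * ⟪trF, divv⟫|
      ≤ t * (a * g + c * s) := by nlinarith
    _ ≤ _ := key
end

section
/- Equivalence of the augmented functional: assume J_*(u,M;0) ≥ c|||(u,M)|||_t² for all (u,M) ∈ X_* and J_*(u,M;0) ≤ C|||(u,M)|||_t² for all (u,M) ∈ X. Then the augmented functional J(u,M;0) := J_*(u,M;0) + t²‖Π⁰ tr M‖² satisfies c'|||(u,M)|||_t² ≤ J(u,M;0) ≤ C'|||(u,M)|||_t² for all (u,M) ∈ X = H¹₀(Ω)^d × H(Div;Ω), with constants independent of t ∈ (0,1]. -/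
/-- Equivalence of the augmented least-squares functional, in the abstract setting of
the reduced Brinkman system (`U` ≅ `H¹₀(Ω)^d`, `MM` ≅ `H(Div;Ω)`, with `div u = tr (grad u)`
and `Π⁰ = P0` the L² projection onto constants). Assume the coercivity
`c·|||(u,M)|||_t² ≤ J_*(u,M;0)` on the mean-zero-trace subspace `X_*` and the continuity
`J_*(u,M;0) ≤ C·|||(u,M)|||_t²` on all of `X`, uniformly in `t ∈ (0,1]`. The structural
facts (shift `M̃ = M - (1/d)(Π⁰tr M)I ∈ X_*` with `Div M̃ = Div M`, `Dev M̃ = Dev M`,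
`tr M̃ = (1-Π⁰)tr M`, and `‖q‖² = ‖q-Π⁰q‖² + ‖Π⁰q‖²`) are hypotheses. Then the augmented
functional `J = J_* + t²‖Π⁰tr M‖²` satisfies `c'|||(u,M)|||_t² ≤ J(u,M;0) ≤ C'|||(u,M)|||_t²`
on all of `X`, with constants independent of `t ∈ (0,1]`. -/
theorem stmt14 {Vec Mat Scal U MM : Type*}
    [NormedAddCommGroup Vec] [InnerProductSpace ℝ Vec]
    [NormedAddCommGroup Mat] [InnerProductSpace ℝ Mat]
    [NormedAddCommGroup Scal] [InnerProductSpace ℝ Scal]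
    [AddCommGroup U] [Module ℝ U] [AddCommGroup MM] [Module ℝ MM]
    (d : ℕ) (hd : 0 < d)
    (ιU : U →ₗ[ℝ] Vec) (grad : U →ₗ[ℝ] Mat)
    (ιM : MM →ₗ[ℝ] Mat) (Divm : MM →ₗ[ℝ] Vec)
    (Dev : Mat →ₗ[ℝ] Mat) (tr : Mat →ₗ[ℝ] Scal) (mean : Scal →ₗ[ℝ] ℝ)
    (P0 : Scal →ₗ[ℝ] Scal)
    (hshift : ∀ M : MM, ∃ M' : MM, mean (tr (ιM M')) = 0 ∧ Divm M' = Divm M ∧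
        Dev (ιM M') = Dev (ιM M) ∧ tr (ιM M') = tr (ιM M) - P0 (tr (ιM M)))
    (hP0 : ∀ q : Scal, ‖q‖ ^ 2 = ‖q - P0 q‖ ^ 2 + ‖P0 q‖ ^ 2)
    (c C : ℝ) (hc : 0 < c) (hC : 0 < C)
    (hlow : ∀ t ∈ Set.Ioc (0 : ℝ) 1, ∀ (u : U) (M : MM), mean (tr (ιM M)) = 0 →
      c * (‖ιU u‖ ^ 2 + t ^ 2 * ‖grad u‖ ^ 2 + ‖tr (grad u)‖ ^ 2 + ‖Dev (ιM M)‖ ^ 2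
          + t ^ 2 * ‖Divm M‖ ^ 2 + t ^ 2 * ‖tr (ιM M)‖ ^ 2)
        ≤ ‖-t • Divm M + ιU u‖ ^ 2 + ‖Dev (ιM M) - t • grad u‖ ^ 2 + ‖tr (grad u)‖ ^ 2)
    (hup : ∀ t ∈ Set.Ioc (0 : ℝ) 1, ∀ (u : U) (M : MM),
      ‖-t • Divm M + ιU u‖ ^ 2 + ‖Dev (ιM M) - t • grad u‖ ^ 2 + ‖tr (grad u)‖ ^ 2
        ≤ C * (‖ιU u‖ ^ 2 + t ^ 2 * ‖grad u‖ ^ 2 + ‖tr (grad u)‖ ^ 2 + ‖Dev (ιM M)‖ ^ 2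
            + t ^ 2 * ‖Divm M‖ ^ 2 + t ^ 2 * ‖tr (ιM M)‖ ^ 2)) :
    ∃ c' > 0, ∃ C' > 0, ∀ t ∈ Set.Ioc (0 : ℝ) 1, ∀ (u : U) (M : MM),
      c' * (‖ιU u‖ ^ 2 + t ^ 2 * ‖grad u‖ ^ 2 + ‖tr (grad u)‖ ^ 2 + ‖Dev (ιM M)‖ ^ 2
            + t ^ 2 * ‖Divm M‖ ^ 2 + t ^ 2 * ‖tr (ιM M)‖ ^ 2)
          ≤ ‖-t • Divm M + ιU u‖ ^ 2 + ‖Dev (ιM M) - t • grad u‖ ^ 2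
            + ‖tr (grad u)‖ ^ 2 + t ^ 2 * ‖P0 (tr (ιM M))‖ ^ 2 ∧
      ‖-t • Divm M + ιU u‖ ^ 2 + ‖Dev (ιM M) - t • grad u‖ ^ 2
            + ‖tr (grad u)‖ ^ 2 + t ^ 2 * ‖P0 (tr (ιM M))‖ ^ 2
          ≤ C' * (‖ιU u‖ ^ 2 + t ^ 2 * ‖grad u‖ ^ 2 + ‖tr (grad u)‖ ^ 2 + ‖Dev (ιM M)‖ ^ 2
            + t ^ 2 * ‖Divm M‖ ^ 2 + t ^ 2 * ‖tr (ιM M)‖ ^ 2) := by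

  refine ⟨min c 1, lt_min hc one_pos, C + 1, by linarith, ?_⟩
  intro t ht u M
  obtain ⟨M', hmean, hDiv, hDev, htr⟩ := hshift M
  have hlo := hlow t ht u M' hmean
  have hup' := hup t ht u M
  have hsplit := hP0 (tr (ιM M))
  rw [hDiv, hDev, htr] at hlo
  have ht2 : (0:ℝ) ≤ t ^ 2 := sq_nonneg t
  have hmin1 : min c 1 ≤ c := min_le_left _ _
  have hmin2 : min c 1 ≤ 1 := min_le_right _ _
  set S : ℝ := ‖ιU u‖ ^ 2 + t ^ 2 * ‖grad u‖ ^ 2 + ‖tr (grad u)‖ ^ 2 + ‖Dev (ιM M)‖ ^ 2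
      + t ^ 2 * ‖Divm M‖ ^ 2 + t ^ 2 * ‖tr (ιM M) - P0 (tr (ιM M))‖ ^ 2 with hS
  set p : ℝ := ‖P0 (tr (ιM M))‖ ^ 2 with hp
  have hSnn : 0 ≤ S := by positivity
  have hpnn : 0 ≤ t ^ 2 * p := by positivity
  have hts : t ^ 2 * ‖tr (ιM M)‖ ^ 2
      = t ^ 2 * ‖tr (ιM M) - P0 (tr (ιM M))‖ ^ 2 + t ^ 2 * p := by
    rw [hsplit]; ring
  have hsum : ‖ιU u‖ ^ 2 + t ^ 2 * ‖grad u‖ ^ 2 + ‖tr (grad u)‖ ^ 2 + ‖Dev (ιM M)‖ ^ 2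
      + t ^ 2 * ‖Divm M‖ ^ 2 + t ^ 2 * ‖tr (ιM M)‖ ^ 2 = S + t ^ 2 * p := by
    rw [hS, hsplit]; ring
  have key1 : min c 1 * (S + t ^ 2 * p) ≤ c * S + t ^ 2 * p := by
    have e1 := mul_le_mul_of_nonneg_right hmin1 hSnn
    have e2 := mul_le_mul_of_nonneg_right hmin2 hpnn
    have e3 : min c 1 * (S + t ^ 2 * p) = min c 1 * S + min c 1 * (t ^ 2 * p) := by ring
    linarith
  constructor
  · rw [hsum]; linarith
  · rw [hsum]
    have e4 : (C + 1) * (S + t ^ 2 * p) = C * (S + t ^ 2 * p) + S + t ^ 2 * p := by ring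
    rw [hsum] at hup'
    linarith
end

section
/- Discrete equivalence of minimizers: let b_* and b be symmetric bilinear forms on a Hilbert space X with b(x,y) = b_*(x,y) + s(x)s(y) for a continuous linear functional s, let L be a continuous linear functional, and let X_h ⊆ X be a closed subspace containing an element e with b_*(x,e) = 0 for all x ∈ X_h, L(e) = 0, and s(e) ≠ 0. Set X_{*,h} := X_h ∩ ker s. If b is coercive on X_h and b_* is coercive on X_{*,h}, then the unique solution x_* ∈ X_{*,h} of b_*(x_*,y) = L(y) for all y ∈ X_{*,h} coincides with the unique solution x ∈ X_h of b(x,y) = L(y) for all y ∈ X_h. -/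
/-! Since `s x_* = 0`, the functional `b(x_*, ·) = b_*(x_*, ·)` agrees with `L` on `X_h ∩ ker s`,
and also at `e`, where both vanish. As `s e ≠ 0`, `X_h = (X_h ∩ ker s) ⊕ ℝ e`, so `x_*` solves the
`b`-problem on all of `X_h`, and coercivity of `b` makes that solution unique. -/

theorem LinearMap.eqOn_submodule_of_eqOn_ker {K M : Type*} [Field K] [AddCommGroup M] [Module K M]
    {p : Submodule K M} {s φ ψ : M →ₗ[K] K} {e : M} (he : e ∈ p) (hse : s e ≠ 0)
    (hφψe : φ e = ψ e) (h : ∀ y ∈ p, s y = 0 → φ y = ψ y) :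
    ∀ y ∈ p, φ y = ψ y := by
  intro y hy
  set c := s y / s e
  have hker : s (y - c • e) = 0 := by
    simp only [map_sub, map_smul, smul_eq_mul, c, div_mul_cancel₀ _ hse, sub_self]
  have key := h (y - c • e) (p.sub_mem hy (p.smul_mem c he)) hker
  simp only [map_sub, map_smul, hφψe] at key
  exact sub_left_injective key

theorem LinearMap.eq_of_coercive_of_eqOn {E : Type*} [NormedAddCommGroup E] [Module ℝ E]
    {B : E →ₗ[ℝ] E →ₗ[ℝ] ℝ} {p : Submodule ℝ E} {α : ℝ} (hα : 0 < α)
    (hcoer : ∀ x ∈ p, α * ‖x‖ ^ 2 ≤ B x x) {x x' : E} (hx : x ∈ p) (hx' : x' ∈ p)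
    (h : ∀ y ∈ p, B x y = B x' y) : x = x' := by
  have hd : x - x' ∈ p := p.sub_mem hx hx'
  have hBd : B (x - x') (x - x') = 0 := by
    rw [LinearMap.map_sub₂, h _ hd, sub_self]
  have hsq : ‖x - x'‖ ^ 2 ≤ 0 :=
    le_of_mul_le_mul_left (by simpa only [hBd, mul_zero] using hcoer _ hd) hα
  have hnorm : ‖x - x'‖ = 0 := pow_eq_zero_iff two_ne_zero |>.mp (le_antisymm hsq (sq_nonneg _))
  exact sub_eq_zero.mp (norm_eq_zero.mp hnorm)

theorem stmt17_general {X : Type*} [NormedAddCommGroup X] [InnerProductSpace ℝ X]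
    (bstar : X →ₗ[ℝ] X →ₗ[ℝ] ℝ)
    (s L : X →L[ℝ] ℝ)
    (b : X → X → ℝ) (hb : ∀ x y, b x y = bstar x y + s x * s y)
    (Xh : Submodule ℝ X)
    (e : X) (he : e ∈ Xh) (hbe : ∀ x ∈ Xh, bstar x e = 0)
    (hLe : L e = 0) (hse : s e ≠ 0)
    (α : ℝ) (hα : 0 < α) (hcoer : ∀ x ∈ Xh, α * ‖x‖ ^ 2 ≤ b x x)
    (xstar : X) (hxs1 : xstar ∈ Xh) (hxs2 : s xstar = 0)
    (hxs3 : ∀ y ∈ Xh, s y = 0 → bstar xstar y = L y)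
    (x : X) (hx1 : x ∈ Xh) (hx2 : ∀ y ∈ Xh, b x y = L y) :
    x = xstar := by
  set B := bstar + (s : X →ₗ[ℝ] ℝ).smulRight (s : X →ₗ[ℝ] ℝ)
  have hB : ∀ u v, B u v = b u v := fun u v => by simp [B, hb]
  have hstar : ∀ y ∈ Xh, bstar xstar y = L y :=
    LinearMap.eqOn_submodule_of_eqOn_ker (s := s) (ψ := L) he hse
      (by rw [hbe xstar hxs1, ContinuousLinearMap.coe_coe, hLe]) hxs3
  have hBxstar : ∀ y ∈ Xh, B xstar y = L y := fun y hy => by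
    rw [hB, hb, hxs2, zero_mul, add_zero, hstar y hy]
  exact LinearMap.eq_of_coercive_of_eqOn hα (fun u hu => (hB u u).symm ▸ hcoer u hu) hx1 hxs1
    fun y hy => by rw [hB, hx2 y hy, hBxstar y hy]

/-- Discrete equivalence of minimizers (abstract Hilbert-space form): let `b_*` and `b`
be symmetric bilinear forms on a Hilbert space `X` with `b(x,y) = b_*(x,y) + s(x)s(y)`
for a continuous linear functional `s`, let `L` be a continuous linear functional, and
let `X_h ⊆ X` be a closed subspace containing `e` with `b_*(x,e) = 0` for all `x ∈ X_h`,
`L(e) = 0`, `s(e) ≠ 0`. If `b` is coercive on `X_h` and `b_*` is coercive on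
`X_{*,h} = X_h ∩ ker s`, then the solution `x_* ∈ X_{*,h}` of
`b_*(x_*, y) = L(y)` for all `y ∈ X_{*,h}` coincides with the solution `x ∈ X_h` of
`b(x, y) = L(y)` for all `y ∈ X_h` (each is unique by coercivity). -/
theorem stmt17 {X : Type*} [NormedAddCommGroup X] [InnerProductSpace ℝ X]
    [CompleteSpace X]
    (bstar : X →ₗ[ℝ] X →ₗ[ℝ] ℝ) (hbstarSym : ∀ x y, bstar x y = bstar y x)
    (s L : X →L[ℝ] ℝ)
    (b : X → X → ℝ) (hb : ∀ x y, b x y = bstar x y + s x * s y)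
    (Xh : Submodule ℝ X) (hXh : IsClosed (Xh : Set X))
    (e : X) (he : e ∈ Xh) (hbe : ∀ x ∈ Xh, bstar x e = 0)
    (hLe : L e = 0) (hse : s e ≠ 0)
    (α : ℝ) (hα : 0 < α) (hcoer : ∀ x ∈ Xh, α * ‖x‖ ^ 2 ≤ b x x)
    (β : ℝ) (hβ : 0 < β) (hcoerstar : ∀ x ∈ Xh, s x = 0 → β * ‖x‖ ^ 2 ≤ bstar x x)
    (xstar : X) (hxs1 : xstar ∈ Xh) (hxs2 : s xstar = 0)
    (hxs3 : ∀ y ∈ Xh, s y = 0 → bstar xstar y = L y)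
    (x : X) (hx1 : x ∈ Xh) (hx2 : ∀ y ∈ Xh, b x y = L y) :
    x = xstar :=
  stmt17_general bstar s L b hb Xh e he hbe hLe hse α hα hcoer xstar hxs1 hxs2 hxs3 x hx1 hx2
end
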